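/- Let f₀(z) = 2 − log 2 + 2z − exp(z). Then the postsingular set satisfies P(f₀) ⊆ {log 2 + 2πim : m ∈ ℤ}; in particular every point of P(f₀) has real part log 2, and dist(P(f₀), H) ≥ 2 + log 2 for the half-plane H = {z ∈ ℂ : Re z < −2}, i.e. |z − w| ≥ 2 + log 2 for all z ∈ P(f₀) and all w ∈ H. -/

import Mathlib

open Filter Topology

/-- The chordal (spherical) distance on `ℂ`. -/
noncomputable def chordalDist (a b : ℂ) : ℝ :=
  2 * ‖a - b‖ /
    (Real.sqrt (1 + ‖a‖ ^ 2) * Real.sqrt (1 + ‖b‖ ^ 2))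

/-- The Fatou set of `f`: points having a neighborhood on which the family of
iterates of `f` is uniformly equicontinuous with respect to the chordal distance. -/
def fatouSet (f : ℂ → ℂ) : Set ℂ :=
  {z | ∃ V ∈ 𝓝 z, ∀ ε : ℝ, 0 < ε → ∃ δ : ℝ, 0 < δ ∧
    ∀ x ∈ V, ∀ y ∈ V, chordalDist x y < δ →
      ∀ n : ℕ, chordalDist (f^[n] x) (f^[n] y) < ε}

/-- The Julia set of `f`. -/
def juliaSet (f : ℂ → ℂ) : Set ℂ := (fatouSet f)ᶜ

/-- A Fatou component: a connected component of the Fatou set. -/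
def IsFatouComponent (f : ℂ → ℂ) (U : Set ℂ) : Prop :=
  ∃ z ∈ fatouSet f, U = connectedComponentIn (fatouSet f) z

/-- A transcendental entire function: entire and not a polynomial. -/
def TranscendentalEntire (f : ℂ → ℂ) : Prop :=
  Differentiable ℂ f ∧ ¬ ∃ p : Polynomial ℂ, ∀ z, f z = p.eval z

/-- `U` is a `p`-periodic Baker domain of `f`: a Fatou component with
`f^[p](U) ⊆ U` on which the iterates `f^[n*p]` tend to `∞` locally uniformly. -/
def IsBakerDomain (f : ℂ → ℂ) (p : ℕ) (U : Set ℂ) : Prop :=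
  IsFatouComponent f U ∧ 1 ≤ p ∧ f^[p] '' U ⊆ U ∧
    ∀ K : Set ℂ, K ⊆ U → IsCompact K → ∀ R : ℝ, 0 < R →
      ∃ N : ℕ, ∀ n ≥ N, ∀ z ∈ K, R < ‖f^[n * p] z‖

/-- `ζ` is accessible from `U`: some curve in `U` lands at `ζ`. -/
def AccessibleFrom (U : Set ℂ) (ζ : ℂ) : Prop :=
  ∃ γ : ℝ → ℂ, ContinuousOn γ (Set.Ico 0 1) ∧ (∀ t ∈ Set.Ico (0:ℝ) 1, γ t ∈ U) ∧
    Tendsto γ (𝓝[Set.Ico (0:ℝ) 1] 1) (𝓝 ζ)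

/-- The set of critical values of `f`. -/
def criticalValues (f : ℂ → ℂ) : Set ℂ := {w | ∃ c : ℂ, deriv f c = 0 ∧ f c = w}

/-- The set of finite asymptotic values of `f`. -/
def asymptoticValues (f : ℂ → ℂ) : Set ℂ :=
  {a | ∃ γ : ℝ → ℂ, ContinuousOn γ (Set.Ici 0) ∧
    Tendsto (fun t => ‖γ t‖) atTop atTop ∧
    Tendsto (fun t => f (γ t)) atTop (𝓝 a)}

/-- `Sing(f⁻¹)`: the closure of the union of critical and finite asymptotic values. -/
def singInv (f : ℂ → ℂ) : Set ℂ := closure (criticalValues f ∪ asymptoticValues f)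

/-- The postsingular set `P(f)`. -/
def postSingular (f : ℂ → ℂ) : Set ℂ := closure (⋃ n : ℕ, f^[n] '' singInv f)

/-- `f` is semihyperbolic at `a`: there are `r > 0` and `N` such that for all `n`,
on each connected component of `(f^[n])⁻¹(D_r(a))` the map `f^[n]` is proper onto
`D_r(a)` with all fibers of cardinality at most `N`. -/
def SemihyperbolicAt (f : ℂ → ℂ) (a : ℂ) : Prop :=
  ∃ r : ℝ, 0 < r ∧ ∃ N : ℕ,
    ∀ n : ℕ, ∀ z : ℂ, f^[n] z ∈ Metric.ball a r →
      (∀ K : Set ℂ, K ⊆ Metric.ball a r → IsCompact K →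
        IsCompact (connectedComponentIn ((f^[n]) ⁻¹' Metric.ball a r) z ∩ (f^[n]) ⁻¹' K)) ∧
      (∀ w ∈ Metric.ball a r,
        (connectedComponentIn ((f^[n]) ⁻¹' Metric.ball a r) z ∩ (f^[n]) ⁻¹' {w}).Finite ∧
        (connectedComponentIn ((f^[n]) ⁻¹' Metric.ball a r) z ∩ (f^[n]) ⁻¹' {w}).ncard ≤ N)

/-- A wandering domain: a Fatou component whose forward images lie in pairwise
distinct Fatou components. -/
def IsWanderingDomain (f : ℂ → ℂ) (W : Set ℂ) : Prop :=
  IsFatouComponent f W ∧ ∀ z ∈ W, ∀ m n : ℕ, m ≠ n →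
    connectedComponentIn (fatouSet f) (f^[m] z) ≠ connectedComponentIn (fatouSet f) (f^[n] z)

/-- An arc in `U` with endpoints `a` and `b`: the image of an injective continuous
map `(0,1) → U` admitting the limits `a` and `b` at the two ends. -/
def IsArcWithEndpoints (U : Set ℂ) (lam : Set ℂ) (a b : ℂ) : Prop :=
  ∃ c : ℝ → ℂ, ContinuousOn c (Set.Ioo 0 1) ∧ Set.InjOn c (Set.Ioo 0 1) ∧
    c '' Set.Ioo 0 1 = lam ∧ lam ⊆ U ∧
    Tendsto c (𝓝[Set.Ioo (0:ℝ) 1] 0) (𝓝 a) ∧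
    Tendsto c (𝓝[Set.Ioo (0:ℝ) 1] 1) (𝓝 b)

/-- The Bergweiler function `f₀(z) = 2 - log 2 + 2z - e^z`. -/
noncomputable def f₀ : ℂ → ℂ := fun z => 2 - Real.log 2 + 2 * z - Complex.exp z

/-! A critical point `c` satisfies `exp c = 2`, and `f₀` maps the closed set `exp ⁻¹' {2}` into
itself, so this set contains every critical value and its forward orbit. There are no finite
asymptotic values. Along a curve `γ → ∞` on which `exp z - 2 z` stays bounded,
`e^{Re z} = |exp z|` is comparable to `|2 z|`, so `Re z` is controlled by `Im z`. On the lines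
`Im z ∈ πℤ` the number `exp z` is real, so `Im (2 z)` is bounded there too and `z` is bounded;
hence far out the curve avoids these lines, `Im γ` is trapped in one strip between them, and `γ`
stays bounded. -/

open Complex Set

lemma norm_le_of_norm_exp_sub_two_mul_le {z : ℂ} {C : ℝ} (h : ‖exp z - 2 * z‖ ≤ C) :
    ‖z‖ ≤ 3 * |z.im| + C + 4 := by
  have hz := norm_le_abs_re_add_abs_im z
  have hexp : ‖exp z‖ = Real.exp z.re := norm_exp z
  have h2z : ‖(2 : ℂ) * z‖ = 2 * ‖z‖ := by rw [norm_mul]; norm_num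
  have hupper : ‖exp z‖ ≤ ‖2 * z‖ + C := by
    simpa using (norm_add_le (exp z - 2 * z) (2 * z)).trans (by linarith)
  have hlower : ‖2 * z‖ ≤ ‖exp z‖ + C := by
    simpa using (norm_sub_le (exp z) (exp z - 2 * z)).trans (by linarith)
  rcases le_or_gt 0 z.re with hx | hx
  · have hquad := Real.quadratic_le_exp_of_nonneg hx
    rw [abs_of_nonneg hx] at hz
    nlinarith [abs_nonneg z.im]
  · have hexp_lt : Real.exp z.re < 1 := Real.exp_lt_one_iff.mpr hx
    have hre := abs_re_le_norm z
    linarith [abs_nonneg z.im]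

lemma two_mul_abs_im_le_of_sin_im_eq_zero {z : ℂ} {C : ℝ} (h : ‖exp z - 2 * z‖ ≤ C)
    (hsin : Real.sin z.im = 0) : 2 * |z.im| ≤ C := by
  have him : (exp z - 2 * z).im = -(2 * z.im) := by simp [exp_im, hsin]
  calc 2 * |z.im| = |(exp z - 2 * z).im| := by rw [him, abs_neg, abs_mul, abs_two]
    _ ≤ C := (abs_im_le_norm _).trans h

lemma IsPreconnected.isBounded_of_forall_int_mul_notMem {S : Set ℝ} (hS : IsPreconnected S)
    {a : ℝ} (ha : 0 < a) (hSa : ∀ k : ℤ, k * a ∉ S) : Bornology.IsBounded S := by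
  rcases S.eq_empty_or_nonempty with rfl | ⟨y, hy⟩
  · exact Bornology.isBounded_empty
  set k := ⌊y / a⌋
  have hk : k * a ≤ y := (le_div_iff₀ ha).mp (Int.floor_le _)
  have hk' : y < (k + 1) * a := (div_lt_iff₀ ha).mp (Int.lt_floor_add_one _)
  refine (Metric.isBounded_Icc (k * a) ((k + 1) * a)).subset fun s hs => ⟨?_, ?_⟩
  · by_contra! hlt
    exact hSa k (hS.Icc_subset hs hy ⟨hlt.le, hk⟩)
  · by_contra! hlt
    have hmem : ((k + 1 : ℤ) : ℝ) * a ∈ Icc y s := by push_cast; exact ⟨hk'.le, hlt.le⟩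
    exact hSa (k + 1) (hS.Icc_subset hy hs hmem)

lemma frequently_lt_norm_exp_sub_two_mul {γ : ℝ → ℂ} (hγ : ContinuousOn γ (Ici 0))
    (hγ_tendsto : Tendsto (fun t => ‖γ t‖) atTop atTop) (C : ℝ) :
    ∃ᶠ t in atTop, C < ‖exp (γ t) - 2 * γ t‖ := by
  intro hbounded
  simp only [not_lt] at hbounded
  obtain ⟨T, hT⟩ :=
    (hbounded.and (hγ_tendsto.eventually_gt_atTop (3 * C + 4))).exists_forall_of_atTop
  have hT' : ∀ t ≥ max T 0, ‖exp (γ t) - 2 * γ t‖ ≤ C ∧ 3 * C + 4 < ‖γ t‖ :=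
    fun t ht => hT t (le_of_max_le_left ht)
  have himage : Bornology.IsBounded ((fun t => (γ t).im) '' Ici (max T 0)) := by
    refine IsPreconnected.isBounded_of_forall_int_mul_notMem ?_ Real.pi_pos ?_
    · exact isPreconnected_Ici.image _ <| continuous_im.comp_continuousOn <|
        hγ.mono fun t (ht : max T 0 ≤ t) => le_of_max_le_right ht
    · rintro k ⟨t, ht, hk⟩
      obtain ⟨hC, hlarge⟩ := hT' t ht
      have hsin : Real.sin (γ t).im = 0 := by
        rw [show (γ t).im = k * Real.pi from hk, Real.sin_int_mul_pi]
      linarith [norm_le_of_norm_exp_sub_two_mul_le hC, two_mul_abs_im_le_of_sin_im_eq_zero hC hsin,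
        abs_nonneg (γ t).im]
  obtain ⟨M, hM⟩ := isBounded_iff_forall_norm_le.mp himage
  obtain ⟨t, hlarge, ht⟩ :=
    ((hγ_tendsto.eventually_gt_atTop (3 * M + C + 4)).and (eventually_ge_atTop (max T 0))).exists
  have him : |(γ t).im| ≤ M := hM _ ⟨t, ht, rfl⟩
  linarith [norm_le_of_norm_exp_sub_two_mul_le (hT' t ht).1]

lemma asymptoticValues_f₀ : asymptoticValues f₀ = ∅ := by
  refine eq_empty_of_forall_notMem fun a ⟨γ, hγ, hγ_tendsto, ha⟩ => ?_
  have hlim : Tendsto (fun t => exp (γ t) - 2 * γ t) atTop (𝓝 (2 - Real.log 2 - a)) :=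
    (tendsto_const_nhds.sub ha).congr fun t => by simp only [f₀]; ring
  obtain ⟨t, hgt, hlt⟩ := ((frequently_lt_norm_exp_sub_two_mul hγ hγ_tendsto _).and_eventually
    (hlim.norm.eventually (gt_mem_nhds (lt_add_one _)))).exists
  exact hgt.not_gt hlt

lemma exp_log_two : exp (Real.log 2) = 2 := by
  rw [← ofReal_exp, Real.exp_log two_pos]
  norm_num

lemma exp_f₀_of_exp_eq_two {z : ℂ} (hz : exp z = 2) : exp (f₀ z) = 2 := by
  have hf₀ : f₀ z = z + z - Real.log 2 := by simp only [f₀, hz]; ring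
  rw [hf₀, exp_sub, exp_add, hz, exp_log_two]
  norm_num

lemma deriv_f₀ (z : ℂ) : deriv f₀ z = 2 - exp z := by
  have h : HasDerivAt f₀ (2 * 1 - exp z) z :=
    (((hasDerivAt_id z).const_mul (2 : ℂ)).const_add _).sub (hasDerivAt_exp z)
  rw [h.deriv, mul_one]

lemma criticalValues_f₀_subset : criticalValues f₀ ⊆ exp ⁻¹' {2} := by
  rintro _ ⟨c, hc, rfl⟩
  rw [deriv_f₀, sub_eq_zero] at hc
  exact exp_f₀_of_exp_eq_two hc.symm

lemma postSingular_subset_of_mapsTo {f : ℂ → ℂ} {K : Set ℂ} (hK : IsClosed K)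
    (hf : MapsTo f K K) (hsing : criticalValues f ∪ asymptoticValues f ⊆ K) :
    postSingular f ⊆ K :=
  closure_minimal (iUnion_subset fun n =>
    (image_mono (closure_minimal hsing hK)).trans (hf.iterate n).image_subset) hK

lemma postSingular_f₀_subset : postSingular f₀ ⊆ exp ⁻¹' {2} :=
  postSingular_subset_of_mapsTo (isClosed_singleton.preimage continuous_exp)
    (fun _ => exp_f₀_of_exp_eq_two)
    (by rw [asymptoticValues_f₀, union_empty]; exact criticalValues_f₀_subset)

lemma exp_eq_two_iff {z : ℂ} :
    exp z = 2 ↔ ∃ m : ℤ, z = (Real.log 2 : ℂ) + (2 * Real.pi : ℝ) * I * (m : ℂ) := by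
  rw [← exp_log_two, exp_eq_exp_iff_exists_int]
  refine exists_congr fun m => ?_
  push_cast
  ring_nf

lemma re_eq_log_two_of_exp_eq_two {z : ℂ} (hz : exp z = 2) : z.re = Real.log 2 := by
  rw [← Real.log_exp z.re, ← norm_exp, hz]
  norm_num

/-- `P(f₀) ⊆ {log 2 + 2πim : m ∈ ℤ}`; in particular every
point of `P(f₀)` has real part `log 2`, and `P(f₀)` is at distance at least
`2 + log 2` from the half-plane `H = {Re z < -2}`. -/
theorem stmt13 :
    (postSingular f₀ ⊆
      {z : ℂ | ∃ m : ℤ, z = (Real.log 2 : ℂ) + (2 * Real.pi : ℝ) * Complex.I * (m : ℂ)}) ∧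
    (∀ z ∈ postSingular f₀, z.re = Real.log 2) ∧
    (∀ z ∈ postSingular f₀, ∀ w : ℂ, w.re < -2 →
      2 + Real.log 2 ≤ ‖z - w‖) := by
  have hre (z : ℂ) (hz : z ∈ postSingular f₀) : z.re = Real.log 2 :=
    re_eq_log_two_of_exp_eq_two (postSingular_f₀_subset hz)
  refine ⟨fun z hz => exp_eq_two_iff.mp (postSingular_f₀_subset hz), hre, fun z hz w hw => ?_⟩
  calc 2 + Real.log 2 ≤ (z - w).re := by rw [sub_re, hre z hz]; linarith
    _ ≤ ‖z - w‖ := re_le_norm _
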